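/- arXiv:math/0503660 — 2 statements merged into one kernel-verified Lean document; each statement's English description precedes it below -/
import Mathlib

section
/- Let p ≥ 2 be an integer with 1/p ≤ θ and set n_k = p^k. If (1/γ_n²) Σ_{i ≤ n, i ∈ S_θ^d, coordinates distinct} h²(X_i) → 0 almost surely as n → ∞ in the sector S_θ^d, then for every ε > 0, Σ_{k=1}^∞ P{ Σ_{i : θ n_k < i_l ≤ n_k for all l, coordinates distinct} h²(X_i) > ε γ_{(n_k,…,n_k)}² } < ∞. -/
open MeasureTheory ProbabilityTheory Filter Finset
open scoped Topology ENNReal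

noncomputable section

/-- The sector `S_θ^d ⊆ ℤ_+^d` (positive integers modelled by `ℕ+`). -/
def sector (d : ℕ) (θ : ℝ) : Set (Fin d → ℕ+) :=
  {i | ∀ l k : Fin d, θ < (i l : ℝ) / (i k : ℝ) ∧ (i l : ℝ) / (i k : ℝ) < 1 / θ}

/-- The filter of `n → ∞` within the sector: every coordinate tends to infinity
(equivalently `min_j n_j → ∞`) and `n` ranges in the sector. -/
def sectorFilter (d : ℕ) (θ : ℝ) : Filter (Fin d → ℕ+) :=
  atTop ⊓ Filter.principal (sector d θ)

/-- The diagonal multi-index `(m, …, m)`. -/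
def diag (d : ℕ) (m : ℕ+) : Fin d → ℕ+ := fun _ => m

open scoped Classical in
/-- Multi-indices `i ≤ n` lying in the sector, with pairwise distinct coordinates. -/
def secIdx (d : ℕ) (θ : ℝ) (n : Fin d → ℕ+) : Finset (Fin d → ℕ+) :=
  (Finset.Icc 1 n).filter fun i => i ∈ sector d θ ∧ Function.Injective i

open scoped Classical in
/-- Multi-indices `i ≤ n` lying in the sector (coordinates may coincide). -/
def secIdxAll (d : ℕ) (θ : ℝ) (n : Fin d → ℕ+) : Finset (Fin d → ℕ+) :=
  (Finset.Icc 1 n).filter fun i => i ∈ sector d θ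

open scoped Classical in
/-- Multi-indices `i ≤ n` with pairwise distinct coordinates. -/
def cubeIdx (d : ℕ) (n : Fin d → ℕ+) : Finset (Fin d → ℕ+) :=
  (Finset.Icc 1 n).filter fun i => Function.Injective i

/-- All multi-indices `i ≤ n`. -/
def cubeIdxAll (d : ℕ) (n : Fin d → ℕ+) : Finset (Fin d → ℕ+) := Finset.Icc 1 n

open scoped Classical in
/-- The block `{i : θ·m < i_l ≤ m for all l}`, with pairwise distinct coordinates. -/
def blockIdx (d : ℕ) (θ : ℝ) (m : ℕ+) : Finset (Fin d → ℕ+) :=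
  (Finset.Icc 1 (diag d m)).filter fun i =>
    (∀ l, θ * (m : ℝ) < (i l : ℝ)) ∧ Function.Injective i

open scoped Classical in
/-- The cube `{i : i_l ≤ (1-θ)·m for all l}`, with pairwise distinct coordinates. -/
def smallCube (d : ℕ) (θ : ℝ) (m : ℕ+) : Finset (Fin d → ℕ+) :=
  (Finset.Icc 1 (diag d m)).filter fun i =>
    (∀ l, (i l : ℝ) ≤ (1 - θ) * (m : ℝ)) ∧ Function.Injective i

/-- Maximum of `f` over a finite index set (`0` for the empty set; used for nonnegative `f`). -/
def finMax {ι : Type*} (s : Finset ι) (f : ι → ℝ) : ℝ := s.fold max 0 f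

lemma blockIdx_mem {d : ℕ} {θ : ℝ} {m : ℕ+} {i : Fin d → ℕ+} (hi : i ∈ blockIdx d θ m) :
    (∀ l, i l ≤ m) ∧ (∀ l, θ * (m : ℝ) < (i l : ℝ)) := by
  rw [blockIdx, Finset.mem_filter, Finset.mem_Icc] at hi
  exact ⟨fun l => hi.1.2 l, hi.2.1⟩

lemma blockIdx_subset_secIdx {d : ℕ} {θ : ℝ} (hθ0 : 0 < θ) (m : ℕ+) :
    blockIdx d θ m ⊆ secIdx d θ (diag d m) := by
  intro i hi
  have h := blockIdx_mem hi
  rw [blockIdx, Finset.mem_filter] at hi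
  classical
  rw [secIdx, Finset.mem_filter]
  refine ⟨hi.1, ?_, hi.2.2⟩
  intro l k
  have hkpos : (0:ℝ) < (i k : ℝ) := by exact_mod_cast (i k).pos
  have hkle : ((i k : ℕ) : ℝ) ≤ ((m : ℕ) : ℝ) := by exact_mod_cast (h.1 k)
  have hlle : ((i l : ℕ) : ℝ) ≤ ((m : ℕ) : ℝ) := by exact_mod_cast (h.1 l)
  constructor
  · rw [lt_div_iff₀ hkpos]
    calc θ * ((i k : ℕ) : ℝ) ≤ θ * ((m : ℕ) : ℝ) := mul_le_mul_of_nonneg_left hkle hθ0.le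
      _ < ((i l : ℕ) : ℝ) := h.2 l
  · rw [div_lt_div_iff₀ hkpos hθ0, one_mul]
    calc ((i l : ℕ) : ℝ) * θ ≤ ((m : ℕ) : ℝ) * θ := mul_le_mul_of_nonneg_right hlle hθ0.le
      _ = θ * ((m : ℕ) : ℝ) := mul_comm _ _
      _ < ((i k : ℕ) : ℝ) := h.2 k

lemma diag_mem_sector {d : ℕ} {θ : ℝ} (hθ0 : 0 < θ) (hθ1 : θ < 1) (m : ℕ+) :
    diag d m ∈ sector d θ := by
  intro l k
  have : ((m : ℕ) : ℝ) / ((m : ℕ) : ℝ) = 1 := div_self (by exact_mod_cast m.pos.ne')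
  show θ < ((m : ℕ) : ℝ) / ((m : ℕ) : ℝ) ∧ ((m : ℕ) : ℝ) / ((m : ℕ) : ℝ) < 1 / θ
  rw [this]
  exact ⟨hθ1, one_lt_one_div hθ0 hθ1⟩

lemma blockIdx_coord_mem {d : ℕ} {θ : ℝ} (p : ℕ+) (hpθ : 1 / (p : ℝ) ≤ θ) (k : ℕ)
    {i : Fin d → ℕ+} (hi : i ∈ blockIdx d θ (p ^ (k + 1))) (l : Fin d) :
    i l ∈ Finset.Ioc (p ^ k) (p ^ (k + 1)) := by
  have h := blockIdx_mem hi
  rw [Finset.mem_Ioc]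
  refine ⟨?_, h.1 l⟩
  have h2 := h.2 l
  push_cast at h2
  have key : ((p : ℕ) : ℝ) ^ k < ((i l : ℕ) : ℝ) := by
    have hppos : (0:ℝ) < ((p : ℕ) : ℝ) := by exact_mod_cast p.pos
    have h1 : (1 / ((p : ℕ) : ℝ)) * ((p : ℕ) : ℝ) ^ (k + 1) = ((p : ℕ) : ℝ) ^ k := by
      field_simp; ring
    calc ((p : ℕ) : ℝ) ^ k = (1 / ((p : ℕ) : ℝ)) * ((p : ℕ) : ℝ) ^ (k + 1) := h1.symm
      _ ≤ θ * ((p : ℕ) : ℝ) ^ (k + 1) := mul_le_mul_of_nonneg_right hpθ (by positivity)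
      _ < ((i l : ℕ) : ℝ) := h2
  have : (p : ℕ) ^ k < ((i l : ℕ)) := by exact_mod_cast key
  exact_mod_cast this

lemma block_disjoint_aux (p : ℕ+) {j k : ℕ} (h : j < k) :
    Disjoint (Finset.Ioc (p ^ j) (p ^ (j + 1))) (Finset.Ioc (p ^ k) (p ^ (k + 1))) := by
  rw [Finset.disjoint_left]
  intro x hx hx'
  rw [Finset.mem_Ioc] at hx hx'
  have hle : p ^ (j + 1) ≤ p ^ k := by
    have : (p : ℕ) ^ (j + 1) ≤ (p : ℕ) ^ k := Nat.pow_le_pow_right p.pos h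
    exact_mod_cast this
  exact absurd ((hx.2.trans hle).trans_lt hx'.1) (lt_irrefl x)

lemma block_disjoint (p : ℕ+) {j k : ℕ} (hjk : j ≠ k) :
    Disjoint (Finset.Ioc (p ^ j) (p ^ (j + 1))) (Finset.Ioc (p ^ k) (p ^ (k + 1))) := by
  rcases hjk.lt_or_gt with h | h
  · exact block_disjoint_aux p h
  · exact (block_disjoint_aux p h).symm

lemma tendsto_diag_sectorFilter {d : ℕ} {θ : ℝ} (hθ0 : 0 < θ) (hθ1 : θ < 1)
    (p : ℕ+) (hp : 2 ≤ p) :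
    Tendsto (fun k : ℕ => _root_.diag d (p ^ (k + 1))) atTop (sectorFilter d θ) := by
  refine tendsto_inf.2 ⟨?_, tendsto_principal.2
    (Eventually.of_forall fun k => diag_mem_sector hθ0 hθ1 _)⟩
  rw [tendsto_atTop]
  intro b
  filter_upwards [eventually_ge_atTop (Finset.univ.sup fun l => (b l : ℕ))] with k hk
  refine Pi.le_def.mpr fun l => ?_
  have h1 : (b l : ℕ) ≤ k := le_trans (Finset.le_sup (f := fun l => (b l : ℕ)) (Finset.mem_univ l)) hk
  have h2 : k < 2 ^ (k + 1) := lt_trans (Nat.lt_two_pow_self (n := k)) (Nat.pow_lt_pow_right one_lt_two (Nat.lt_succ_self k))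
  have h3 : 2 ^ (k + 1) ≤ (p : ℕ) ^ (k + 1) := Nat.pow_le_pow_left (by exact_mod_cast hp) _
  have : (b l : ℕ) ≤ (p : ℕ) ^ (k + 1) := le_of_lt (lt_of_le_of_lt h1 (lt_of_lt_of_le h2 h3))
  exact_mod_cast this

def cylSet {E : Type*} [MeasurableSpace E] {d : ℕ} (h : (Fin d → E) → ℝ)
    (B : Finset (Fin d → ℕ+)) (U : Finset ℕ+) (c : ℝ) : Set (U → E) :=
  {v | c < ∑ i ∈ (B.filter fun i => ∀ l, i l ∈ U).attach,
      (h fun l => v ⟨i.1 l, (Finset.mem_filter.1 i.2).2 l⟩) ^ 2}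

lemma cylSet_meas {E : Type*} [MeasurableSpace E] {d : ℕ} {h : (Fin d → E) → ℝ}
    (hhm : Measurable h) (B : Finset (Fin d → ℕ+)) (U : Finset ℕ+) (c : ℝ) :
    MeasurableSet (cylSet h B U c) := by
  apply measurableSet_lt measurable_const
  exact Finset.measurable_sum _ fun i _ =>
    (hhm.comp (measurable_pi_lambda _ fun l => measurable_pi_apply _)).pow_const 2

lemma cylSet_preimage {E Ω : Type*} [MeasurableSpace E] (X : ℕ+ → Ω → E) {d : ℕ}
    (h : (Fin d → E) → ℝ) (B : Finset (Fin d → ℕ+)) (U : Finset ℕ+)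
    (hU : ∀ i ∈ B, ∀ l, i l ∈ U) (c : ℝ) :
    (fun ω (j : U) => X (j : ℕ+) ω) ⁻¹' cylSet h B U c
      = {ω | c < ∑ i ∈ B, (h fun l => X (i l) ω) ^ 2} := by
  ext ω
  simp only [cylSet, Set.mem_preimage, Set.mem_setOf_eq]
  rw [Finset.sum_attach (B.filter fun i => ∀ l, i l ∈ U)
      (fun x => (h fun l => X (x l) ω) ^ 2),
    Finset.filter_true_of_mem hU]


/-- If the sectorial normalized sums of squares converge a.s. then the block-sum tail
probabilities along `n_k = p^k` are summable. -/
theorem summable_block_squares_of_sectorial_squares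
{E Ω : Type*} [MeasurableSpace E] [MeasurableSpace Ω]
    (μ : Measure Ω) [IsProbabilityMeasure μ]
    (d : ℕ) (hd : 1 ≤ d) (θ : ℝ) (hθ0 : 0 < θ) (hθ1 : θ < 1)
(X : ℕ+ → Ω → E) (hXm : ∀ i, Measurable (X i))
    (hXind : iIndepFun X μ)
    (hXid : ∀ i j : ℕ+, IdentDistrib (X i) (X j) μ μ)
(h : (Fin d → E) → ℝ) (hhm : Measurable h)
    (hsym : ∀ (σ : Equiv.Perm (Fin d)) (x : Fin d → E), h (x ∘ σ) = h x)
(γ : (Fin d → ℕ+) → ℝ) (hγpos : ∀ n, 0 < γ n) (hγmono : Monotone γ)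
    (C : ℝ) (hC : 0 < C) (hγdbl : ∀ n, γ (fun j => 2 * n j) ≤ C * γ n)
    (hγ3 : ∀ l : ℕ, 1 ≤ l →
      (∑' k : ℕ, (2 : ℝ) ^ (d * (l + k)) / (γ (diag d (2 ^ (l + k)))) ^ 2)
        ≤ C * (2 : ℝ) ^ (d * l) / (γ (diag d (2 ^ l))) ^ 2)
    (p : ℕ+) (hp : 2 ≤ p) (hpθ : 1 / (p : ℝ) ≤ θ)
    (hconv : ∀ᵐ ω ∂μ, Tendsto
      (fun n => (∑ i ∈ secIdx d θ n, (h fun l => X (i l) ω) ^ 2) / (γ n) ^ 2)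
      (sectorFilter d θ) (𝓝 0)) :
    ∀ ε : ℝ, 0 < ε →
      (∑' k : ℕ, μ {ω | ε * (γ (diag d (p ^ (k + 1)))) ^ 2 <
        ∑ i ∈ blockIdx d θ (p ^ (k + 1)), (h fun l => X (i l) ω) ^ 2}) < ⊤ := by
  intro ε hε
  classical
  set S : ℕ → Finset ℕ+ := fun k => Finset.Ioc (p ^ k) (p ^ (k + 1)) with hSdef
  set A : ℕ → Set Ω := fun k => {ω | ε * (γ (_root_.diag d (p ^ (k + 1)))) ^ 2 <
      ∑ i ∈ blockIdx d θ (p ^ (k + 1)), (h fun l => X (i l) ω) ^ 2} with hAdef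
  show (∑' k : ℕ, μ (A k)) < ⊤
  have hγsq : ∀ k : ℕ, (0:ℝ) < (γ (_root_.diag d (p ^ (k + 1)))) ^ 2 :=
    fun k => pow_pos (hγpos _) 2
  have hUmem : ∀ k, ∀ i ∈ blockIdx d θ (p ^ (k + 1)), ∀ l, i l ∈ S k :=
    fun k i hi l => blockIdx_coord_mem p hpθ k hi l
  -- measurability of the events
  have hArep : ∀ (k : ℕ) (U : Finset ℕ+), (∀ i ∈ blockIdx d θ (p ^ (k + 1)), ∀ l, i l ∈ U) →
      A k = (fun ω (j : U) => X (j : ℕ+) ω) ⁻¹' cylSet h (blockIdx d θ (p ^ (k + 1))) U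
        (ε * (γ (_root_.diag d (p ^ (k + 1)))) ^ 2) := by
    intro k U hU
    exact (cylSet_preimage X h _ _ hU _).symm
  have hFm : ∀ U : Finset ℕ+, Measurable (fun ω (j : U) => X (j : ℕ+) ω) :=
    fun U => measurable_pi_lambda _ fun j => hXm j
  have hAm : ∀ k, MeasurableSet (A k) := by
    intro k
    rw [hArep k (S k) (hUmem k)]
    exact hFm (S k) (cylSet_meas hhm _ _ _)
  -- limsup has measure zero
  have hae : ∀ᵐ ω ∂μ, ω ∉ limsup A atTop := by
    filter_upwards [hconv] with ω hω
    have hT := hω.comp (tendsto_diag_sectorFilter hθ0 hθ1 p hp)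
    have hev : ∀ᶠ k in atTop, ω ∉ A k := by
      filter_upwards [hT.eventually_lt_const hε] with k hk
      intro hmem
      have hmem' : ε * (γ (_root_.diag d (p ^ (k + 1)))) ^ 2 <
          ∑ i ∈ blockIdx d θ (p ^ (k + 1)), (h fun l => X (i l) ω) ^ 2 := hmem
      have hsub : ∑ i ∈ blockIdx d θ (p ^ (k + 1)), (h fun l => X (i l) ω) ^ 2
          ≤ ∑ i ∈ secIdx d θ (_root_.diag d (p ^ (k + 1))), (h fun l => X (i l) ω) ^ 2 :=
        Finset.sum_le_sum_of_subset_of_nonneg (blockIdx_subset_secIdx hθ0 _)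
          (fun i _ _ => sq_nonneg _)
      rw [Function.comp_apply, div_lt_iff₀ (hγsq k)] at hk
      linarith
    intro hmem
    rw [mem_limsup_iff_frequently_mem] at hmem
    exact ((hev.and_frequently hmem).exists).elim (fun k hk => hk.1 hk.2)
  have h0 : μ (limsup A atTop) = 0 := measure_eq_zero_iff_ae_notMem.2 hae
  -- independence of the events
  have hprod : ∀ t : Finset ℕ, μ (⋂ k ∈ t, A k) = ∏ k ∈ t, μ (A k) := by
    intro t
    induction t using Finset.induction_on with
    | empty => simp
    | @insert a t ha ih =>
      have hTdisj : Disjoint (S a) (t.biUnion S) := by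
        rw [Finset.disjoint_biUnion_right]
        intro k hk
        exact block_disjoint p (fun hak => ha (hak ▸ hk))
      have hUT : ∀ k ∈ t, ∀ i ∈ blockIdx d θ (p ^ (k + 1)), ∀ l, i l ∈ t.biUnion S :=
        fun k hk i hi l => Finset.mem_biUnion.2 ⟨k, hk, hUmem k i hi l⟩
      have hindep := hXind.indepFun_finset (S a) (t.biUnion S) hTdisj hXm
      have hI : (⋂ k ∈ t, A k) = (fun ω (j : t.biUnion S) => X (j : ℕ+) ω) ⁻¹'
          (⋂ k ∈ t, cylSet h (blockIdx d θ (p ^ (k + 1))) (t.biUnion S)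
            (ε * (γ (_root_.diag d (p ^ (k + 1)))) ^ 2)) := by
        rw [Set.preimage_iInter₂]
        exact Set.iInter₂_congr fun k hk => hArep k (t.biUnion S) (hUT k hk)
      have hBm : MeasurableSet (⋂ k ∈ t, cylSet h (blockIdx d θ (p ^ (k + 1))) (t.biUnion S)
          (ε * (γ (_root_.diag d (p ^ (k + 1)))) ^ 2)) :=
        MeasurableSet.biInter (t : Set ℕ).to_countable fun k _ => cylSet_meas hhm _ _ _
      calc μ (⋂ k ∈ insert a t, A k) = μ (A a ∩ ⋂ k ∈ t, A k) := by rw [Finset.set_biInter_insert]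
        _ = μ ((fun ω (j : S a) => X (j : ℕ+) ω) ⁻¹' cylSet h (blockIdx d θ (p ^ (a + 1))) (S a)
              (ε * (γ (_root_.diag d (p ^ (a + 1)))) ^ 2) ∩
            (fun ω (j : t.biUnion S) => X (j : ℕ+) ω) ⁻¹'
              (⋂ k ∈ t, cylSet h (blockIdx d θ (p ^ (k + 1))) (t.biUnion S)
                (ε * (γ (_root_.diag d (p ^ (k + 1)))) ^ 2))) := by
            rw [← hArep a (S a) (hUmem a), ← hI]
        _ = μ ((fun ω (j : S a) => X (j : ℕ+) ω) ⁻¹' cylSet h (blockIdx d θ (p ^ (a + 1))) (S a)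
              (ε * (γ (_root_.diag d (p ^ (a + 1)))) ^ 2)) *
            μ ((fun ω (j : t.biUnion S) => X (j : ℕ+) ω) ⁻¹'
              (⋂ k ∈ t, cylSet h (blockIdx d θ (p ^ (k + 1))) (t.biUnion S)
                (ε * (γ (_root_.diag d (p ^ (k + 1)))) ^ 2))) :=
            hindep.measure_inter_preimage_eq_mul _ _ (cylSet_meas hhm _ _ _) hBm
        _ = μ (A a) * μ (⋂ k ∈ t, A k) := by rw [← hArep a (S a) (hUmem a), ← hI]
        _ = μ (A a) * ∏ k ∈ t, μ (A k) := by rw [ih]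
        _ = ∏ k ∈ insert a t, μ (A k) := by rw [Finset.prod_insert ha]
  have hAind : iIndepSet A μ := (iIndepSet_iff_meas_biInter hAm).2 hprod
  by_contra hcon
  rw [not_lt, top_le_iff] at hcon
  have h1 := measure_limsup_eq_one hAm hAind hcon
  rw [h0] at h1
  exact zero_ne_one h1
end
end

section
/- Let h : E^d → ℝ be nonnegative, let p ≥ 2 be an integer with 1/p ≤ θ, and set n_k = p^k. If for every ε > 0 one has Σ_{k=1}^∞ P{ max{ h(X_i) : θ n_k < i_l ≤ n_k for all l, coordinates of i distinct } > ε γ_{(n_k,…,n_k)} } < ∞, then (1/γ_{(n_k,…,n_k)}) · max{ h(X_i) : i_l ≤ (1−θ) n_k for all l, coordinates of i distinct } → 0 almost surely as k → ∞. -/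
open MeasureTheory ProbabilityTheory Filter Finset
open scoped Topology ENNReal

noncomputable section

section Aux

lemma finMax_nonneg {ι : Type*} (s : Finset ι) (f : ι → ℝ) : 0 ≤ finMax s f :=
  (Finset.le_fold_max _).2 (Or.inl le_rfl)

lemma le_finMax {ι : Type*} {s : Finset ι} {f : ι → ℝ} {i : ι} (hi : i ∈ s) :
    f i ≤ finMax s f :=
  (Finset.le_fold_max _).2 (Or.inr ⟨i, hi, le_rfl⟩)

lemma finMax_le {ι : Type*} {s : Finset ι} {f : ι → ℝ} {c : ℝ} (hc : 0 ≤ c)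
    (hf : ∀ i ∈ s, f i ≤ c) : finMax s f ≤ c :=
  (Finset.fold_max_le _).2 ⟨hc, hf⟩

lemma measurable_finMax {ι α : Type*} [MeasurableSpace α] (s : Finset ι)
    (f : ι → α → ℝ) (hf : ∀ i, Measurable (f i)) :
    Measurable fun a => finMax s fun i => f i a := by
  classical
  induction s using Finset.cons_induction with
  | empty => simp only [finMax, Finset.fold_empty]; exact measurable_const
  | cons i s hi ih => simpa [finMax, Finset.fold_cons] using (hf i).max ih

lemma finMax_attach {ι : Type*} (s : Finset ι) (f : ι → ℝ) :
    finMax s.attach (fun x => f x.1) = finMax s f := by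
  classical
  conv_rhs => rw [← Finset.attach_image_val (s := s)]
  rw [finMax, finMax, Finset.fold_image]
  · rfl
  · intro x _ y _ hxy; exact Subtype.ext hxy

lemma joint_map_eq_pi {E Ω : Type*} [MeasurableSpace E] [MeasurableSpace Ω]
    (μ : Measure Ω) [IsProbabilityMeasure μ]
    (X : ℕ+ → Ω → E) (hXm : ∀ i, Measurable (X i))
    (hXind : iIndepFun X μ)
    {ι : Type*} [Fintype ι] (e : ι → ℕ+) (he : Function.Injective e) :
    Measure.map (fun ω (j : ι) => X (e j) ω) μ
      = Measure.pi fun j => Measure.map (X (e j)) μ := by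
  classical
  have hprob : ∀ j : ι, IsProbabilityMeasure (Measure.map (X (e j)) μ) :=
    fun j => Measure.isProbabilityMeasure_map (hXm _).aemeasurable
  haveI : ∀ j : ι, SigmaFinite (Measure.map (X (e j)) μ) := fun j => by
    haveI := hprob j; infer_instance
  refine (Measure.pi_eq (μ := fun j => Measure.map (X (e j)) μ)
    (μ' := Measure.map (fun ω (j : ι) => X (e j) ω) μ) fun s hs => ?_).symm
  rw [Measure.map_apply (measurable_pi_iff.2 fun j => hXm _) (MeasurableSet.univ_pi hs)]
  set sets : ℕ+ → Set E := fun m => if h : ∃ j, e j = m then s h.choose else Set.univ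
    with hsets
  have hse : ∀ j : ι, sets (e j) = s j := by
    intro j
    have hex : ∃ j', e j' = e j := ⟨j, rfl⟩
    simp only [hsets, dif_pos hex]
    rw [he hex.choose_spec]
  have hpre : (fun ω (j : ι) => X (e j) ω) ⁻¹' Set.pi Set.univ s
      = ⋂ m ∈ Finset.image e Finset.univ, X m ⁻¹' sets m := by
    ext ω
    simp only [Set.mem_preimage, Set.mem_pi, Set.mem_univ, forall_true_left,
      Set.mem_iInter, Finset.mem_image, Finset.mem_univ, true_and]
    constructor
    · rintro hω m ⟨j, rfl⟩
      rw [hse j]; exact hω j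
    · intro hω j
      have := hω (e j) ⟨j, rfl⟩
      rwa [hse j] at this
  have hmeas : ∀ m ∈ Finset.image e Finset.univ,
      MeasurableSet[‹MeasurableSpace E›] (sets m) := by
    intro m hm
    obtain ⟨j, -, rfl⟩ := Finset.mem_image.1 hm
    rw [hse j]; exact hs j
  rw [hpre, hXind.measure_inter_preimage_eq_mul _ hmeas,
    Finset.prod_image (fun x _ y _ hxy => he hxy)]
  refine Finset.prod_congr rfl fun j _ => ?_
  rw [hse j, Measure.map_apply (hXm _) (hs j)]

lemma joint_identDistrib {E Ω : Type*} [MeasurableSpace E] [MeasurableSpace Ω]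
    (μ : Measure Ω) [IsProbabilityMeasure μ]
    (X : ℕ+ → Ω → E) (hXm : ∀ i, Measurable (X i))
    (hXind : iIndepFun X μ)
    (hXid : ∀ i j : ℕ+, IdentDistrib (X i) (X j) μ μ)
    {ι : Type*} [Fintype ι] (e e' : ι → ℕ+)
    (he : Function.Injective e) (he' : Function.Injective e') :
    IdentDistrib (fun ω (j : ι) => X (e j) ω) (fun ω (j : ι) => X (e' j) ω) μ μ := by
  refine ⟨(measurable_pi_iff.2 fun j => hXm _).aemeasurable,
    (measurable_pi_iff.2 fun j => hXm _).aemeasurable, ?_⟩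
  rw [joint_map_eq_pi μ X hXm hXind e he, joint_map_eq_pi μ X hXm hXind e' he']
  exact congrArg Measure.pi (funext fun j => ((hXid (e j) (e' j)).map_eq))

end Aux

/-- Summability of the block-maxima tail probabilities implies a.s. convergence of the
normalized maxima over the cubes of side `(1-θ)·n_k`. -/
theorem smallCube_max_of_summable_block_max
{E Ω : Type*} [MeasurableSpace E] [MeasurableSpace Ω]
    (μ : Measure Ω) [IsProbabilityMeasure μ]
    (d : ℕ) (hd : 1 ≤ d) (θ : ℝ) (hθ0 : 0 < θ) (hθ1 : θ < 1)
(X : ℕ+ → Ω → E) (hXm : ∀ i, Measurable (X i))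
    (hXind : iIndepFun X μ)
    (hXid : ∀ i j : ℕ+, IdentDistrib (X i) (X j) μ μ)
(h : (Fin d → E) → ℝ) (hhm : Measurable h)
    (hsym : ∀ (σ : Equiv.Perm (Fin d)) (x : Fin d → E), h (x ∘ σ) = h x)
    (hh0 : ∀ x, 0 ≤ h x)
    (γ : (Fin d → ℕ+) → ℝ) (hγpos : ∀ n, 0 < γ n) (hγmono : Monotone γ)
    (p : ℕ+) (hp : 2 ≤ p) (hpθ : 1 / (p : ℝ) ≤ θ)
    (hsum : ∀ ε : ℝ, 0 < ε →
      (∑' k : ℕ, μ {ω | ε * γ (diag d (p ^ (k + 1))) <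
        finMax (blockIdx d θ (p ^ (k + 1))) (fun i => h fun l => X (i l) ω)}) < ⊤) :
    ∀ᵐ ω ∂μ, Tendsto
      (fun k : ℕ =>
        finMax (smallCube d θ (p ^ (k + 1))) (fun i => h fun l => X (i l) ω)
          / γ (diag d (p ^ (k + 1))))
      atTop (𝓝 0) := by
    classical
  have pnat_cancel : ∀ {a b t : ℕ+}, a + t = b + t → a = b := by
    intro a b t habt
    have h2 : ((a : ℕ) + (t : ℕ)) = ((b : ℕ) + (t : ℕ)) := by
      rw [← PNat.add_coe, ← PNat.add_coe, habt]
    exact PNat.coe_injective (Nat.add_right_cancel h2)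
  have key : ∀ (c : ℝ) (m : ℕ+),
      μ {ω | c < finMax (smallCube d θ m) fun i => h fun l => X (i l) ω}
        ≤ μ {ω | c < finMax (blockIdx d θ m) fun i => h fun l => X (i l) ω} := by
    intro c m
    have hθm : 0 < θ * (m : ℝ) := mul_pos hθ0 (by exact_mod_cast m.pos)
    set t : ℕ+ := ⟨⌈θ * (m : ℝ)⌉₊, Nat.ceil_pos.2 hθm⟩ with htdef
    have htlb : θ * (m : ℝ) ≤ ((t : ℕ) : ℝ) := Nat.le_ceil _
    have htub : ((t : ℕ) : ℝ) < θ * (m : ℝ) + 1 := Nat.ceil_lt_add_one hθm.le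
    set S := smallCube d θ m with hSdef
    have hshift : ∀ i ∈ S, (fun l => i l + t) ∈ blockIdx d θ m := by
      intro i hi
      simp only [hSdef, smallCube, Finset.mem_filter, Finset.mem_Icc] at hi
      obtain ⟨⟨hi1, hi2⟩, hub, hinj⟩ := hi
      have hcoe : ∀ l, ((i l + t : ℕ+) : ℝ) = ((i l : ℕ) : ℝ) + ((t : ℕ) : ℝ) := by
        intro l; rw [PNat.add_coe]; push_cast; ring
      simp only [blockIdx, Finset.mem_filter, Finset.mem_Icc]
      refine ⟨⟨Pi.le_def.2 fun l => (i l + t).one_le, Pi.le_def.2 fun l => ?_⟩,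
        fun l => ?_, fun a b hab => hinj (pnat_cancel hab)⟩
      · have hubl : ((i l : ℕ) : ℝ) ≤ (1 - θ) * (m : ℝ) := hub l
        have hreal : ((i l : ℕ) : ℝ) + ((t : ℕ) : ℝ) < ((m : ℕ) : ℝ) + 1 := by
          nlinarith
        have hnat : (i l : ℕ) + (t : ℕ) < (m : ℕ) + 1 := by exact_mod_cast hreal
        show i l + t ≤ diag d m l
        rw [← PNat.coe_le_coe, PNat.add_coe]
        exact Nat.lt_succ_iff.1 hnat
      · show θ * (m : ℝ) < ((i l + t : ℕ+) : ℝ)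
        rw [hcoe l]
        have : (1 : ℝ) ≤ ((i l : ℕ) : ℝ) := by exact_mod_cast (i l).one_le
        linarith
    set T : Finset ℕ+ := S.biUnion (fun i => Finset.image i Finset.univ) with hTdef
    have hmemT : ∀ i (hi : i ∈ S) (l : Fin d), i l ∈ T := fun i hi l =>
      Finset.mem_biUnion.2 ⟨i, hi, Finset.mem_image.2 ⟨l, Finset.mem_univ l, rfl⟩⟩
    set G : (↥T → E) → ℝ := fun y =>
      finMax S.attach fun i => h fun l => y ⟨i.1 l, hmemT i.1 i.2 l⟩ with hGdef
    have hGmeas : Measurable G :=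
      measurable_finMax _ _ fun i =>
        hhm.comp (measurable_pi_lambda _ fun l => measurable_pi_apply _)
    have hid : IdentDistrib (fun ω (j : ↥T) => X j.1 ω)
        (fun ω (j : ↥T) => X (j.1 + t) ω) μ μ :=
      joint_identDistrib μ X hXm hXind hXid _ _ Subtype.val_injective
        (fun a b hab => Subtype.val_injective (pnat_cancel hab))
    have hmeq := (hid.comp hGmeas).measure_mem_eq (measurableSet_Ioi (a := c))
    have hG1 : ∀ ω : Ω, G (fun j => X j.1 ω) = finMax S fun i => h fun l => X (i l) ω :=
      fun ω => finMax_attach S fun i => h fun l => X (i l) ω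
    have hle : ∀ ω : Ω, G (fun j => X (j.1 + t) ω)
        ≤ finMax (blockIdx d θ m) fun i => h fun l => X (i l) ω := by
      intro ω
      refine finMax_le (finMax_nonneg _ _) fun i _ => ?_
      exact le_finMax (f := fun i => h fun l => X (i l) ω) (hshift i.1 i.2)
    calc μ {ω | c < finMax S fun i => h fun l => X (i l) ω}
        = μ ((G ∘ fun ω (j : ↥T) => X j.1 ω) ⁻¹' Set.Ioi c) := by
          congr 1; ext ω
          simp only [Set.mem_setOf_eq, Set.mem_preimage, Function.comp_apply,
            Set.mem_Ioi, hG1 ω]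
      _ = μ ((G ∘ fun ω (j : ↥T) => X (j.1 + t) ω) ⁻¹' Set.Ioi c) := hmeq
      _ ≤ μ {ω | c < finMax (blockIdx d θ m) fun i => h fun l => X (i l) ω} := by
          refine measure_mono fun ω hω => ?_
          exact lt_of_lt_of_le hω (hle ω)
  have BC : ∀ ε : ℝ, 0 < ε → ∀ᵐ ω ∂μ, ∀ᶠ k in atTop,
      finMax (smallCube d θ (p ^ (k + 1))) (fun i => h fun l => X (i l) ω)
        ≤ ε * γ (diag d (p ^ (k + 1))) := by
    intro ε hε
    have hne : (∑' k : ℕ, μ {ω | ε * γ (diag d (p ^ (k + 1))) <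
        finMax (smallCube d θ (p ^ (k + 1))) fun i => h fun l => X (i l) ω}) ≠ ∞ :=
      ne_top_of_le_ne_top (hsum ε hε).ne (ENNReal.tsum_le_tsum fun k => key _ _)
    filter_upwards [ae_eventually_notMem hne] with ω hω
    exact hω.mono fun k hk => not_lt.1 hk
  have BCall : ∀ᵐ ω ∂μ, ∀ q : ℕ, ∀ᶠ k in atTop,
      finMax (smallCube d θ (p ^ (k + 1))) (fun i => h fun l => X (i l) ω)
        ≤ (1 / ((q : ℝ) + 1)) * γ (diag d (p ^ (k + 1))) :=
    ae_all_iff.2 fun q => BC _ (by positivity)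
  filter_upwards [BCall] with ω hω
  rw [NormedAddCommGroup.tendsto_nhds_zero]
  intro ε hε
  obtain ⟨q, hq⟩ := exists_nat_one_div_lt hε
  filter_upwards [hω q] with k hk
  have hγ := hγpos (diag d (p ^ (k + 1)))
  have h0 : (0:ℝ) ≤ finMax (smallCube d θ (p ^ (k + 1))) (fun i => h fun l => X (i l) ω) :=
    finMax_nonneg _ _
  rw [Real.norm_eq_abs, abs_of_nonneg (div_nonneg h0 hγ.le)]
  exact lt_of_le_of_lt ((div_le_iff₀ hγ).2 hk) hq
end
end
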